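/- arXiv:2510.16646 — 4 statements merged into one kernel-verified Lean document; each statement's English description precedes it below -/
import Mathlib

section
/- For r > 0 and σ > 0, all roots of the polynomial P(z) = z³ + 2σz² + σ²z + rσ² have negative real part if and only if σ > r/2. -/
theorem routh_hurwitz_cubic (r σ : ℝ) (hr : 0 < r) (hσ : 0 < σ) :
    (∀ z : ℂ, z ^ 3 + 2 * (σ : ℂ) * z ^ 2 + (σ : ℂ) ^ 2 * z + (r : ℂ) * (σ : ℂ) ^ 2 = 0 →
      z.re < 0) ↔ σ > r / 2 := by
  constructor
  · intro h
    by_contra hle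
    push_neg at hle
    have hcont : Continuous (fun x : ℝ => 8*x^3 + 16*σ*x^2 + 10*σ^2*x + 2*σ^3) := by
      continuity
    have hsub := intermediate_value_Icc (le_of_lt hr) hcont.continuousOn
    have hmem : r * σ^2 ∈ Set.Icc ((fun x : ℝ => 8*x^3 + 16*σ*x^2 + 10*σ^2*x + 2*σ^3) 0)
        ((fun x : ℝ => 8*x^3 + 16*σ*x^2 + 10*σ^2*x + 2*σ^3) r) := by
      constructor <;> simp <;> nlinarith
    obtain ⟨x, hx, hgx⟩ := hsub hmem
    have hgx' : 8*x^3 + 16*σ*x^2 + 10*σ^2*x + 2*σ^3 = r * σ^2 := hgx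
    have hx0 : 0 ≤ x := hx.1
    set y := Real.sqrt (3*x^2 + 4*σ*x + σ^2) with hy
    have hy2 : y^2 = 3*x^2 + 4*σ*x + σ^2 := Real.sq_sqrt (by nlinarith)
    have := h ((x : ℂ) + (y : ℂ) * Complex.I) ?_
    · simp at this; linarith
    · rw [Complex.ext_iff]
      constructor <;>
        simp [Complex.add_re, Complex.add_im, Complex.mul_re, Complex.mul_im, pow_succ]
      · linear_combination (-3*x - 2*σ) * hy2 - hgx'
      · linear_combination (-y) * hy2
  · intro h z hz
    by_contra hre0
    push_neg at hre0
    rw [Complex.ext_iff] at hz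
    simp [Complex.add_re, Complex.add_im, Complex.mul_re, Complex.mul_im, pow_succ] at hz
    obtain ⟨h1, h2⟩ := hz
    set x := z.re
    set y := z.im
    have h3 : y * (3*x^2 - y^2 + 4*σ*x + σ^2) = 0 := by linear_combination h2
    rcases mul_eq_zero.mp h3 with hy0 | hy2
    · rw [hy0] at h1
      nlinarith [pow_nonneg hre0 3, sq_nonneg x, mul_pos hr (mul_pos hσ hσ)]
    · have hy2' : y^2 = 3*x^2 + 4*σ*x + σ^2 := by linarith
      nlinarith [h1, hy2', pow_nonneg hre0 3, sq_nonneg x, mul_pos hσ (mul_pos hσ hσ), hre0]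
end

section
/- Let F : ℝ^D × ℝ^D → ℝ^D be Lipschitz: ‖F(x₂,y₂) − F(x₁,y₁)‖ ≤ L‖x₂−x₁‖ + L‖y₂−y₁‖. Let α_k^{(1)}, α_k^{(2)} ∈ L¹([0,∞)) (k = 1,…,N), c_k ∈ ℝ, and let x₁, x₂ solve ẋ_m(t) = F(x_m(t), Σ_k c_k (α_k^{(m)} ⊗ (J x_m))(t)) on [0,T] with identical history x_m(τ) = u(τ) for τ ≤ 0, where x₂ is bounded on (-∞,T]. Then with Δ(t) = sup_{0≤s≤t} ‖x₂(s) − x₁(s)‖ and Ω_N = 1 + Σ_k |c_k| ‖α_k^{(1)}‖₁, Δ(T) ≤ L T · (sup_{t ≤ T} ‖x₂(t)‖) · (Σ_k |c_k| ‖α_k^{(2)} − α_k^{(1)}‖₁) · exp(Ω_N L T). -/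
open MeasureTheory

section Helpers

variable {E : Type*} [NormedAddCommGroup E] [NormedSpace ℝ E]

private lemma cov_integral (t : ℝ) (β : ℝ → ℝ) :
    ∫ s in Set.Iic t, β (t - s) = ∫ v in Set.Ici (0:ℝ), β v := by
  have h := (Measure.measurePreserving_sub_left volume t).setIntegral_preimage_emb
    (MeasurableEquiv.subLeft t).measurableEmbedding β (Set.Ici 0)
  have hpre : (fun s : ℝ => t - s) ⁻¹' Set.Ici 0 = Set.Iic t := by
    ext s; simp [sub_nonneg]
  rw [hpre] at h
  exact h

private lemma cov_integrableOn (t : ℝ) {β : ℝ → ℝ} (hβ : IntegrableOn β (Set.Ici 0)) :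
    IntegrableOn (fun s => β (t - s)) (Set.Iic t) := by
  have h := (Measure.measurePreserving_sub_left volume t).integrableOn_comp_preimage
    (f := β) (s := Set.Ici 0) (MeasurableEquiv.subLeft t).measurableEmbedding
  have hpre : (fun s : ℝ => t - s) ⁻¹' Set.Ici 0 = Set.Iic t := by
    ext s; simp [sub_nonneg]
  rw [hpre] at h
  exact h.2 hβ

private lemma conv_integrableOn (t : ℝ) {β : ℝ → ℝ} (hβ : IntegrableOn β (Set.Ici 0))
    {v : ℝ → E} (hv : AEStronglyMeasurable v (volume.restrict (Set.Iic t)))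
    {c : ℝ} (hc : ∀ s ≤ t, ‖v s‖ ≤ c) :
    IntegrableOn (fun s => β (t - s) • v s) (Set.Iic t) := by
  have hβ' := cov_integrableOn t hβ
  refine Integrable.mono' ((hβ'.norm.mul_const c)) (hβ'.aestronglyMeasurable.smul hv) ?_
  filter_upwards [self_mem_ae_restrict (measurableSet_Iic : MeasurableSet (Set.Iic t))] with s hs
  rw [norm_smul]
  exact mul_le_mul_of_nonneg_left (hc s hs) (norm_nonneg _)

private lemma conv_norm_le (t : ℝ) {β : ℝ → ℝ} (hβ : IntegrableOn β (Set.Ici 0))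
    {v : ℝ → E} (hv : AEStronglyMeasurable v (volume.restrict (Set.Iic t)))
    {c : ℝ} (hc : ∀ s ≤ t, ‖v s‖ ≤ c) :
    ‖∫ s in Set.Iic t, β (t - s) • v s‖ ≤ (∫ w in Set.Ici (0:ℝ), |β w|) * c := by
  have hβ' := cov_integrableOn t hβ
  calc ‖∫ s in Set.Iic t, β (t - s) • v s‖
      ≤ ∫ s in Set.Iic t, ‖β (t - s) • v s‖ := norm_integral_le_integral_norm _
    _ ≤ ∫ s in Set.Iic t, |β (t - s)| * c := by
        refine setIntegral_mono_on (conv_integrableOn t hβ hv hc).norm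
          (hβ'.norm.mul_const c) measurableSet_Iic (fun s hs => ?_)
        rw [norm_smul]
        exact mul_le_mul_of_nonneg_left (hc s hs) (norm_nonneg _)
    _ = (∫ s in Set.Iic t, |β (t - s)|) * c := by rw [integral_mul_const]
    _ = (∫ w in Set.Ici (0:ℝ), |β w|) * c := by rw [cov_integral t (fun w => |β w|)]

end Helpers

theorem continuous_dependence_on_history (D N : ℕ) (T L : ℝ) (hT : 0 < T) (hL : 0 ≤ L)
    (F : EuclideanSpace ℝ (Fin D) × EuclideanSpace ℝ (Fin D) → EuclideanSpace ℝ (Fin D))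
    (hF : ∀ x₁ y₁ x₂ y₂, ‖F (x₂, y₂) - F (x₁, y₁)‖ ≤ L * ‖x₂ - x₁‖ + L * ‖y₂ - y₁‖)
    (c : Fin N → ℝ) (α₁ α₂ : Fin N → ℝ → ℝ)
    (hα₁ : ∀ k, IntegrableOn (α₁ k) (Set.Ici 0))
    (hα₂ : ∀ k, IntegrableOn (α₂ k) (Set.Ici 0))
    (J : EuclideanSpace ℝ (Fin D) →L[ℝ] EuclideanSpace ℝ (Fin D)) (hJ : ‖J‖ ≤ 1)
    (u x₁ x₂ : ℝ → EuclideanSpace ℝ (Fin D))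
    (hx₁c : Continuous x₁) (hx₂c : Continuous x₂)
    (hist₁ : ∀ τ ≤ (0 : ℝ), x₁ τ = u τ) (hist₂ : ∀ τ ≤ (0 : ℝ), x₂ τ = u τ)
    (hbdd : ∃ C, ∀ t ≤ T, ‖x₂ t‖ ≤ C)
    (ode₁ : ∀ t ∈ Set.Icc (0 : ℝ) T, HasDerivAt x₁
      (F (x₁ t, ∑ k, c k • (∫ s in Set.Iic t, α₁ k (t - s) • J (x₁ s)))) t)
    (ode₂ : ∀ t ∈ Set.Icc (0 : ℝ) T, HasDerivAt x₂
      (F (x₂ t, ∑ k, c k • (∫ s in Set.Iic t, α₂ k (t - s) • J (x₂ s)))) t) :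
    (⨆ s : Set.Icc (0 : ℝ) T, ‖x₂ s - x₁ s‖) ≤
      L * T * (⨆ t : Set.Iic T, ‖x₂ t‖) *
        (∑ k, |c k| * ∫ v in Set.Ici (0 : ℝ), |α₂ k v - α₁ k v|) *
        Real.exp ((1 + ∑ k, |c k| * ∫ v in Set.Ici (0 : ℝ), |α₁ k v|) * L * T) := by
  obtain ⟨C, hC⟩ := hbdd
  -- basic abbreviations
  set e : ℝ → ℝ := fun s => ‖x₂ s - x₁ s‖ with he_def
  have he_cont : Continuous e := (hx₂c.sub hx₁c).norm
  have he_nonneg : ∀ s, 0 ≤ e s := fun s => norm_nonneg _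
  have he0 : ∀ s ≤ (0:ℝ), e s = 0 := fun s hs => by
    simp only [he_def, hist₁ s hs, hist₂ s hs, sub_self, norm_zero]
  set M : ℝ := ⨆ t : Set.Iic T, ‖x₂ t‖ with hM_def
  have hMbdd : BddAbove (Set.range fun t : Set.Iic T => ‖x₂ t‖) := by
    refine ⟨C, ?_⟩; rintro _ ⟨t, rfl⟩; exact hC t t.2
  have hM_ge : ∀ s ≤ T, ‖x₂ s‖ ≤ M := fun s hs => le_ciSup hMbdd (⟨s, hs⟩ : Set.Iic T)
  have hM0 : 0 ≤ M := le_trans (norm_nonneg _) (hM_ge 0 hT.le)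
  set A : ℝ := ∑ k, |c k| * ∫ v in Set.Ici (0:ℝ), |α₂ k v - α₁ k v| with hA_def
  set B : ℝ := ∑ k, |c k| * ∫ v in Set.Ici (0:ℝ), |α₁ k v| with hB_def
  have hA0 : 0 ≤ A := Finset.sum_nonneg fun k _ =>
    mul_nonneg (abs_nonneg _) (integral_nonneg fun v => abs_nonneg _)
  have hB0 : 0 ≤ B := Finset.sum_nonneg fun k _ =>
    mul_nonneg (abs_nonneg _) (integral_nonneg fun v => abs_nonneg _)
  set K : ℝ := (1 + B) * L with hK_def
  have hK0 : 0 ≤ K := mul_nonneg (by linarith) hL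
  set ep : ℝ := L * M * A with hep_def
  have hep0 : 0 ≤ ep := mul_nonneg (mul_nonneg hL hM0) hA0
  -- the running sup
  set Δ : ℝ → ℝ := fun t => sSup (e '' Set.Icc 0 t) with hΔ_def
  have hbddΔ : ∀ t, BddAbove (e '' Set.Icc 0 t) := fun t =>
    (isCompact_Icc.image_of_continuousOn he_cont.continuousOn).bddAbove
  have hΔ_ge : ∀ s t : ℝ, 0 ≤ s → s ≤ t → e s ≤ Δ t := fun s t hs hst =>
    le_csSup (hbddΔ t) ⟨s, ⟨hs, hst⟩, rfl⟩
  have hΔ0 : ∀ t : ℝ, 0 ≤ t → 0 ≤ Δ t := fun t ht => by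
    have := hΔ_ge 0 t le_rfl ht
    rw [he0 0 le_rfl] at this; exact this
  have hΔ_ge' : ∀ s t : ℝ, s ≤ t → 0 ≤ t → e s ≤ Δ t := by
    intro s t hst ht
    rcases le_or_gt s 0 with hs | hs
    · rw [he0 s hs]; exact hΔ0 t ht
    · exact hΔ_ge s t hs.le hst
  have hΔmono : Monotone Δ := by
    intro a b hab
    rcases lt_or_ge a 0 with ha | ha
    · rcases lt_or_ge b 0 with hb | hb
      · rw [hΔ_def]
        simp only [Set.Icc_eq_empty_of_lt ha, Set.Icc_eq_empty_of_lt hb]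
        exact le_rfl
      · rw [hΔ_def]
        simp only [Set.Icc_eq_empty_of_lt ha, Set.image_empty, Real.sSup_empty]
        exact hΔ0 b hb
    · exact csSup_le_csSup (hbddΔ b)
        ⟨e a, ⟨a, ⟨ha, le_rfl⟩, rfl⟩⟩
        (Set.image_mono (f := e) (Set.Icc_subset_Icc le_rfl hab))
  -- operator norm bound
  have hJn : ∀ z : EuclideanSpace ℝ (Fin D), ‖J z‖ ≤ ‖z‖ := fun z =>
    (J.le_opNorm z).trans (by nlinarith [norm_nonneg z])
  -- uniform bound for x₁ on Iic T
  obtain ⟨C₀, hC₀⟩ : ∃ C₀, ∀ s ∈ Set.Icc (0:ℝ) T, ‖x₁ s‖ ≤ C₀ :=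
    isCompact_Icc.exists_bound_of_continuousOn hx₁c.continuousOn
  have hx₁bd : ∀ s ≤ T, ‖x₁ s‖ ≤ max C C₀ := by
    intro s hs
    rcases le_or_gt s 0 with h | h
    · rw [hist₁ s h, ← hist₂ s h]
      exact (hC s hs).trans (le_max_left _ _)
    · exact (hC₀ s ⟨h.le, hs⟩).trans (le_max_right _ _)
  -- the derivative of the difference
  set G' : ℝ → EuclideanSpace ℝ (Fin D) := fun t =>
    F (x₂ t, ∑ k, c k • (∫ s in Set.Iic t, α₂ k (t - s) • J (x₂ s))) -
    F (x₁ t, ∑ k, c k • (∫ s in Set.Iic t, α₁ k (t - s) • J (x₁ s))) with hG'_def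
  have hder : ∀ t ∈ Set.Icc (0:ℝ) T, HasDerivAt (fun τ => x₂ τ - x₁ τ) (G' t) t :=
    fun t ht => (ode₂ t ht).sub (ode₁ t ht)
  -- the key pointwise estimate
  have key : ∀ t ∈ Set.Icc (0:ℝ) T, ‖G' t‖ ≤ K * Δ t + ep := by
    intro t ht
    have haesm₂ : AEStronglyMeasurable (fun s => J (x₂ s)) (volume.restrict (Set.Iic t)) :=
      (J.continuous.comp hx₂c).aestronglyMeasurable
    have haesm₁ : AEStronglyMeasurable (fun s => J (x₁ s)) (volume.restrict (Set.Iic t)) :=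
      (J.continuous.comp hx₁c).aestronglyMeasurable
    have haesmd : AEStronglyMeasurable (fun s => J (x₂ s - x₁ s))
        (volume.restrict (Set.Iic t)) :=
      (J.continuous.comp (hx₂c.sub hx₁c)).aestronglyMeasurable
    have hx₂m : ∀ s ≤ t, ‖J (x₂ s)‖ ≤ M := fun s hs =>
      (hJn _).trans (hM_ge s (hs.trans ht.2))
    have hx₁m : ∀ s ≤ t, ‖J (x₁ s)‖ ≤ max C C₀ := fun s hs =>
      (hJn _).trans (hx₁bd s (hs.trans ht.2))
    have hdm : ∀ s ≤ t, ‖J (x₂ s - x₁ s)‖ ≤ Δ t := fun s hs =>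
      (hJn _).trans (hΔ_ge' s t hs ht.1)
    have hk : ∀ k, ‖(c k • ∫ s in Set.Iic t, α₂ k (t - s) • J (x₂ s)) -
        c k • ∫ s in Set.Iic t, α₁ k (t - s) • J (x₁ s)‖ ≤
        |c k| * ((∫ w in Set.Ici (0:ℝ), |α₂ k w - α₁ k w|) * M +
          (∫ w in Set.Ici (0:ℝ), |α₁ k w|) * Δ t) := by
      intro k
      have hint₂ : IntegrableOn (fun s => α₂ k (t - s) • J (x₂ s)) (Set.Iic t) :=
        conv_integrableOn t (hα₂ k) haesm₂ hx₂m
      have hint₁ : IntegrableOn (fun s => α₁ k (t - s) • J (x₁ s)) (Set.Iic t) :=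
        conv_integrableOn t (hα₁ k) haesm₁ hx₁m
      have hintC : IntegrableOn
          (fun s => (α₂ k (t - s) - α₁ k (t - s)) • J (x₂ s)) (Set.Iic t) :=
        conv_integrableOn t ((hα₂ k).sub (hα₁ k)) haesm₂ hx₂m
      have hintD : IntegrableOn (fun s => α₁ k (t - s) • J (x₂ s - x₁ s)) (Set.Iic t) :=
        conv_integrableOn t (hα₁ k) haesmd hdm
      have hsplit : (∫ s in Set.Iic t, α₂ k (t - s) • J (x₂ s)) -
          (∫ s in Set.Iic t, α₁ k (t - s) • J (x₁ s)) =
          (∫ s in Set.Iic t, (α₂ k (t - s) - α₁ k (t - s)) • J (x₂ s)) +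
          ∫ s in Set.Iic t, α₁ k (t - s) • J (x₂ s - x₁ s) := by
        rw [← integral_sub hint₂ hint₁, ← integral_add hintC hintD]
        refine integral_congr_ae (Filter.Eventually.of_forall fun s => ?_)
        simp only [sub_smul, smul_sub, map_sub]
        abel
      rw [← smul_sub, norm_smul, Real.norm_eq_abs]
      refine mul_le_mul_of_nonneg_left ?_ (abs_nonneg _)
      rw [hsplit]
      refine (norm_add_le _ _).trans (add_le_add ?_ ?_)
      · exact conv_norm_le t ((hα₂ k).sub (hα₁ k)) haesm₂ hx₂m
      · exact conv_norm_le t (hα₁ k) haesmd hdm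
    have hy : ‖(∑ k, c k • ∫ s in Set.Iic t, α₂ k (t - s) • J (x₂ s)) -
        ∑ k, c k • ∫ s in Set.Iic t, α₁ k (t - s) • J (x₁ s)‖ ≤ A * M + B * Δ t := by
      rw [← Finset.sum_sub_distrib]
      refine (norm_sum_le _ _).trans ?_
      refine (Finset.sum_le_sum fun k _ => hk k).trans_eq ?_
      simp only [mul_add, Finset.sum_add_distrib, hA_def, hB_def, Finset.sum_mul, mul_assoc]
    calc ‖G' t‖ ≤ L * ‖x₂ t - x₁ t‖ +
        L * ‖(∑ k, c k • ∫ s in Set.Iic t, α₂ k (t - s) • J (x₂ s)) -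
          ∑ k, c k • ∫ s in Set.Iic t, α₁ k (t - s) • J (x₁ s)‖ := hF _ _ _ _
      _ ≤ L * Δ t + L * (A * M + B * Δ t) := add_le_add
          (mul_le_mul_of_nonneg_left (hΔ_ge t t ht.1 le_rfl) hL)
          (mul_le_mul_of_nonneg_left hy hL)
      _ = K * Δ t + ep := by rw [hK_def, hep_def]; ring
  -- the integrable majorant
  set q : ℝ → ℝ := fun s => K * Δ s + ep with hq_def
  have hqint : ∀ a b : ℝ, IntervalIntegrable q volume a b := fun a b =>
    ((hΔmono.intervalIntegrable).const_mul K).add intervalIntegrable_const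
  have hq0 : ∀ s : ℝ, 0 ≤ s → 0 ≤ q s := fun s hs =>
    add_nonneg (mul_nonneg hK0 (hΔ0 s hs)) hep0
  set φ : ℝ → ℝ := fun r => ∫ s in (0:ℝ)..r, q s with hφ_def
  have hφcont : Continuous φ := intervalIntegral.continuous_primitive hqint 0
  -- FTC step : e ≤ φ on [0, T]
  have heφ : ∀ t ∈ Set.Icc (0:ℝ) T, e t ≤ φ t := by
    intro t ht
    have hIccsub : Set.Icc (0:ℝ) t ⊆ Set.Icc 0 T := Set.Icc_subset_Icc le_rfl ht.2
    have hG'int : IntervalIntegrable G' volume 0 t := by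
      rw [intervalIntegrable_iff_integrableOn_Icc_of_le ht.1]
      have hqI : IntegrableOn q (Set.Icc 0 t) :=
        (intervalIntegrable_iff_integrableOn_Icc_of_le ht.1).1 (hqint 0 t)
      refine hqI.mono' ?_ ?_
      · refine ((measurable_deriv (fun τ => x₂ τ - x₁ τ)).aestronglyMeasurable).congr ?_
        filter_upwards [self_mem_ae_restrict measurableSet_Icc] with s hs
        exact (hder s (hIccsub hs)).deriv
      · filter_upwards [self_mem_ae_restrict measurableSet_Icc] with s hs
        exact key s (hIccsub hs)
    have hftc : ∫ s in (0:ℝ)..t, G' s = (x₂ t - x₁ t) - (x₂ 0 - x₁ 0) :=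
      intervalIntegral.integral_eq_sub_of_hasDerivAt
        (fun s hs => hder s (hIccsub (by rwa [Set.uIcc_of_le ht.1] at hs))) hG'int
    have h00 : x₂ 0 - x₁ 0 = 0 := by
      rw [hist₁ 0 le_rfl, hist₂ 0 le_rfl, sub_self]
    have h1 : e t = ‖∫ s in (0:ℝ)..t, G' s‖ := by
      rw [hftc, h00, sub_zero]
    rw [h1]
    have hae : ∀ᵐ s ∂volume.restrict (Set.uIoc 0 t), ‖G' s‖ ≤ q s := by
      filter_upwards [self_mem_ae_restrict measurableSet_uIoc] with s hs
      rw [Set.uIoc_of_le ht.1] at hs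
      exact key s ⟨hs.1.le, hs.2.trans ht.2⟩
    refine (intervalIntegral.norm_integral_le_abs_of_norm_le hae (hqint 0 t)).trans_eq ?_
    exact abs_of_nonneg (intervalIntegral.integral_nonneg ht.1 fun s hs => hq0 s hs.1)
  have hφmono : ∀ s t : ℝ, 0 ≤ s → s ≤ t → φ s ≤ φ t := by
    intro s t hs hst
    have hadd : φ s + ∫ u in s..t, q u = φ t :=
      intervalIntegral.integral_add_adjacent_intervals (hqint 0 s) (hqint s t)
    have hnn : 0 ≤ ∫ u in s..t, q u :=
      intervalIntegral.integral_nonneg hst fun u hu => hq0 u (hs.trans hu.1)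
    linarith
  have hΔφ : ∀ t ∈ Set.Icc (0:ℝ) T, Δ t ≤ φ t := by
    intro t ht
    refine csSup_le ⟨e 0, ⟨0, ⟨le_rfl, ht.1⟩, rfl⟩⟩ ?_
    rintro _ ⟨s, hs, rfl⟩
    exact (heφ s ⟨hs.1, hs.2.trans ht.2⟩).trans (hφmono s t hs.1 hs.2)
  have hφ0 : ∀ t ∈ Set.Icc (0:ℝ) T, 0 ≤ φ t := fun t ht =>
    (he_nonneg t).trans (heφ t ht)
  -- second primitive and Grönwall
  have hcont2 : Continuous (fun s => K * φ s + ep) :=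
    (continuous_const.mul hφcont).add continuous_const
  set ψ : ℝ → ℝ := fun r => ∫ s in (0:ℝ)..r, (K * φ s + ep) with hψ_def
  have hψcont : Continuous ψ :=
    intervalIntegral.continuous_primitive (fun a b => hcont2.intervalIntegrable a b) 0
  have hψd : ∀ r : ℝ, HasDerivAt ψ (K * φ r + ep) r := fun r =>
    intervalIntegral.integral_hasDerivAt_right (hcont2.intervalIntegrable 0 r)
      (hcont2.stronglyMeasurableAtFilter volume (nhds r)) hcont2.continuousAt
  have hφψ : ∀ t ∈ Set.Icc (0:ℝ) T, φ t ≤ ψ t := by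
    intro t ht
    refine intervalIntegral.integral_mono_on ht.1 (hqint 0 t)
      (hcont2.intervalIntegrable 0 t) fun s hs => ?_
    exact add_le_add_left
      (mul_le_mul_of_nonneg_left (hΔφ s ⟨hs.1, hs.2.trans ht.2⟩) hK0) ep
  have hψ0 : ψ 0 = 0 := intervalIntegral.integral_same
  have hGr : ∀ r ∈ Set.Icc (0:ℝ) T, ‖ψ r‖ ≤ gronwallBound 0 K ep (r - 0) := by
    refine norm_le_gronwallBound_of_norm_deriv_right_le hψcont.continuousOn
      (fun r _ => (hψd r).hasDerivWithinAt) (by rw [hψ0, norm_zero]) ?_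
    intro r hr
    have h1 : 0 ≤ φ r := hφ0 r ⟨hr.1, hr.2.le⟩
    have h2 : φ r ≤ ‖ψ r‖ := (hφψ r ⟨hr.1, hr.2.le⟩).trans (le_abs_self _)
    rw [Real.norm_eq_abs, abs_of_nonneg (add_nonneg (mul_nonneg hK0 h1) hep0)]
    have := mul_le_mul_of_nonneg_left h2 hK0
    rw [Real.norm_eq_abs] at this ⊢
    linarith
  have hψT : ψ T ≤ gronwallBound 0 K ep T := by
    have := hGr T ⟨hT.le, le_rfl⟩
    rw [sub_zero, Real.norm_eq_abs] at this
    exact (le_abs_self _).trans this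
  -- bound the Grönwall bound
  have hgb : gronwallBound 0 K ep T ≤ ep * T * Real.exp (K * T) := by
    rcases eq_or_lt_of_le hK0 with hK | hK
    · rw [← hK, gronwallBound_K0]
      simp only [zero_mul, Real.exp_zero, mul_one, zero_add]
      linarith
    · rw [gronwallBound_of_K_ne_0 hK.ne']
      have hx : 0 ≤ K * T := mul_nonneg hK0 hT.le
      have hexp : Real.exp (K * T) - 1 ≤ (K * T) * Real.exp (K * T) := by
        have h1 := Real.add_one_le_exp (-(K * T))
        rw [Real.exp_neg] at h1
        have h2 := Real.exp_pos (K * T)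
        have h3 := mul_le_mul_of_nonneg_right h1 h2.le
        rw [inv_mul_cancel₀ h2.ne'] at h3
        nlinarith
      have h3 : ep / K * (Real.exp (K * T) - 1) ≤ ep / K * ((K * T) * Real.exp (K * T)) :=
        mul_le_mul_of_nonneg_left hexp (div_nonneg hep0 hK.le)
      have h4 : ep / K * ((K * T) * Real.exp (K * T)) = ep * T * Real.exp (K * T) := by
        field_simp
      rw [h4] at h3
      simpa using h3
  -- conclude
  haveI : Nonempty (Set.Icc (0:ℝ) T) := ⟨⟨0, Set.mem_Icc.mpr ⟨le_rfl, hT.le⟩⟩⟩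
  calc (⨆ s : Set.Icc (0 : ℝ) T, ‖x₂ s - x₁ s‖)
      ≤ Δ T := ciSup_le fun s => le_csSup (hbddΔ T) ⟨(s : ℝ), s.2, rfl⟩
    _ ≤ φ T := hΔφ T ⟨hT.le, le_rfl⟩
    _ ≤ ψ T := hφψ T ⟨hT.le, le_rfl⟩
    _ ≤ gronwallBound 0 K ep T := hψT
    _ ≤ ep * T * Real.exp (K * T) := hgb
    _ = L * T * M * A * Real.exp ((1 + B) * L * T) := by rw [hK_def, hep_def]; ring
end

section
/- The 7×7 Jacobian matrix M with rows (0,0,-r,0,0,0,0), (σ,-σ,0,0,0,0,0), (0,σ,-σ,0,0,0,0), (σ,0,0,-σ,-Ω,0,0), (0,0,0,Ω,-σ,0,0), (0,0,0,σ,0,-σ,-Ω), (0,0,0,0,σ,Ω,-σ) has characteristic polynomial (z³ + 2σz² + σ²z + rσ²)·((z+σ)² + Ω²)². -/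
open Polynomial

private lemma cv5 {α : Type*} (a : α) (u : Fin 6 → α) :
    Matrix.vecCons a u 5 = u 4 := rfl

private lemma cv6 {α : Type*} (a : α) (u : Fin 6 → α) :
    Matrix.vecCons a u 6 = u 5 := rfl

private lemma cv5' {α : Type*} (a : α) (u : Fin 5 → α) :
    Matrix.vecCons a u 5 = u 4 := rfl

set_option maxHeartbeats 4000000 in
set_option maxRecDepth 20000 in
theorem charpoly_J7 (r σ Ω : ℝ) :
    Matrix.charpoly
      (!![0, 0, -r, 0, 0, 0, 0;
          σ, -σ, 0, 0, 0, 0, 0;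
          0, σ, -σ, 0, 0, 0, 0;
          σ, 0, 0, -σ, -Ω, 0, 0;
          0, 0, 0, Ω, -σ, 0, 0;
          0, 0, 0, σ, 0, -σ, -Ω;
          0, 0, 0, 0, σ, Ω, -σ] : Matrix (Fin 7) (Fin 7) ℝ) =
      (X ^ 3 + C (2 * σ) * X ^ 2 + C (σ ^ 2) * X + C (r * σ ^ 2)) *
        ((X + C σ) ^ 2 + C (Ω ^ 2)) ^ 2 := by
  have h : Matrix.charmatrix
      (!![0, 0, -r, 0, 0, 0, 0;
          σ, -σ, 0, 0, 0, 0, 0;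
          0, σ, -σ, 0, 0, 0, 0;
          σ, 0, 0, -σ, -Ω, 0, 0;
          0, 0, 0, Ω, -σ, 0, 0;
          0, 0, 0, σ, 0, -σ, -Ω;
          0, 0, 0, 0, σ, Ω, -σ] : Matrix (Fin 7) (Fin 7) ℝ) =
      !![X, 0, C r, 0, 0, 0, 0;
         -C σ, X + C σ, 0, 0, 0, 0, 0;
         0, -C σ, X + C σ, 0, 0, 0, 0;
         -C σ, 0, 0, X + C σ, C Ω, 0, 0;
         0, 0, 0, -C Ω, X + C σ, 0, 0;
         0, 0, 0, -C σ, 0, X + C σ, C Ω;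
         0, 0, 0, 0, -C σ, -C Ω, X + C σ] := by
    ext i j : 2
    fin_cases i <;> fin_cases j <;>
      simp [Matrix.charmatrix_apply, Matrix.one_apply, cv5, cv6, cv5',
        Matrix.vecHead, Matrix.vecTail]
  rw [Matrix.charpoly, h]
  rw [← Matrix.det_submatrix_equiv_self (finSumFinEquiv (m := 3) (n := 4))]
  have hblock : (!![X, 0, C r, 0, 0, 0, 0;
         -C σ, X + C σ, 0, 0, 0, 0, 0;
         0, -C σ, X + C σ, 0, 0, 0, 0;
         -C σ, 0, 0, X + C σ, C Ω, 0, 0;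
         0, 0, 0, -C Ω, X + C σ, 0, 0;
         0, 0, 0, -C σ, 0, X + C σ, C Ω;
         0, 0, 0, 0, -C σ, -C Ω, X + C σ] : Matrix (Fin 7) (Fin 7) ℝ[X]).submatrix
        (finSumFinEquiv (m := 3) (n := 4)) (finSumFinEquiv (m := 3) (n := 4)) =
      Matrix.fromBlocks
        !![X, 0, C r; -C σ, X + C σ, 0; 0, -C σ, X + C σ]
        0
        !![-C σ, 0, 0; 0, 0, 0; 0, 0, 0; 0, 0, 0]
        !![X + C σ, C Ω, 0, 0; -C Ω, X + C σ, 0, 0; -C σ, 0, X + C σ, C Ω; 0, -C σ, -C Ω, X + C σ] := by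
    ext i j
    rcases i with i | i <;> rcases j with j | j <;> fin_cases i <;> fin_cases j <;> rfl
  rw [hblock, Matrix.det_fromBlocks_zero₁₂, Matrix.det_fin_three]
  have h4 : (!![X + C σ, C Ω, 0, 0; -C Ω, X + C σ, 0, 0; -C σ, 0, X + C σ, C Ω;
      0, -C σ, -C Ω, X + C σ] : Matrix (Fin 4) (Fin 4) ℝ[X]).det =
      ((X + C σ) ^ 2 + C (Ω ^ 2)) ^ 2 := by
    rw [Matrix.det_succ_row_zero]
    simp [Fin.sum_univ_succ, Matrix.det_fin_three, Fin.succAbove]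
    ring
  rw [h4, show (C (2 * σ) : ℝ[X]) = 2 * C σ by rw [_root_.map_mul, map_ofNat]]
  simp only [Matrix.cons_val', Matrix.cons_val_zero, Matrix.cons_val_one, Matrix.head_cons,
    Matrix.empty_val', Matrix.cons_val_fin_one, Matrix.head_fin_const, Matrix.of_apply,
    Matrix.cons_val_two, Matrix.tail_cons, map_pow, _root_.map_mul]
  ring
end

section
/- For the 7×7 Jacobian D F(P_e) of the LCT system (with rows as in the paper, upper-left entry row (0,0,-U_e,0,0,-εU_e,0) and the remaining six rows as the linear chain), the determinant satisfies det(D F(P_e)) = U_e σ⁶ (ε(θ−1) − (θ+1)²), where θ = (Ω/σ)², i.e. the constant term of the characteristic polynomial is a₇ = −U_e σ⁶ (ε(θ−1) − (θ+1)²). -/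
set_option maxHeartbeats 2000000 in
set_option maxRecDepth 4000 in
private lemma det6A (σ Ω : ℝ) :
    (!![σ, -σ, 0, 0, 0, 0;
        0, σ, 0, 0, 0, 0;
        σ, 0, -σ, -Ω, 0, 0;
        0, 0, Ω, -σ, 0, 0;
        0, 0, σ, 0, -σ, -Ω;
        0, 0, 0, σ, Ω, -σ] : Matrix (Fin 6) (Fin 6) ℝ).det
      = σ ^ 2 * (σ ^ 2 + Ω ^ 2) ^ 2 := by
  simp [Matrix.det_succ_row_zero, Fin.sum_univ_succ, Fin.succAbove]
  ring

set_option maxHeartbeats 2000000 in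
set_option maxRecDepth 4000 in
private lemma det6B (σ Ω : ℝ) :
    (!![σ, -σ, 0, 0, 0, 0;
        0, σ, -σ, 0, 0, 0;
        σ, 0, 0, -σ, -Ω, 0;
        0, 0, 0, Ω, -σ, 0;
        0, 0, 0, σ, 0, -Ω;
        0, 0, 0, 0, σ, -σ] : Matrix (Fin 6) (Fin 6) ℝ).det
      = σ ^ 4 * (Ω ^ 2 - σ ^ 2) := by
  simp [Matrix.det_succ_row_zero, Fin.sum_univ_succ, Fin.succAbove]
  ring

set_option maxHeartbeats 2000000 in
set_option maxRecDepth 4000 in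
theorem det_jacobian_Pe (σ Ω ε Ue : ℝ) (hσ : 0 < σ) (θ : ℝ) (hθ : θ = (Ω / σ) ^ 2) :
    let M : Matrix (Fin 7) (Fin 7) ℝ :=
      !![0, 0, -Ue, 0, 0, -ε * Ue, 0;
         σ, -σ, 0, 0, 0, 0, 0;
         0, σ, -σ, 0, 0, 0, 0;
         σ, 0, 0, -σ, -Ω, 0, 0;
         0, 0, 0, Ω, -σ, 0, 0;
         0, 0, 0, σ, 0, -σ, -Ω;
         0, 0, 0, 0, σ, Ω, -σ]
    M.det = Ue * σ ^ 6 * (ε * (θ - 1) - (θ + 1) ^ 2) ∧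
    (Matrix.charpoly M).coeff 0 = -(Ue * σ ^ 6 * (ε * (θ - 1) - (θ + 1) ^ 2)) := by
  intro M
  have hA : (!![0, 0, -Ue, 0, 0, -(ε * Ue), 0;
         σ, -σ, 0, 0, 0, 0, 0;
         0, σ, -σ, 0, 0, 0, 0;
         σ, 0, 0, -σ, -Ω, 0, 0;
         0, 0, 0, Ω, -σ, 0, 0;
         0, 0, 0, σ, 0, -σ, -Ω;
         0, 0, 0, 0, σ, Ω, -σ] : Matrix (Fin 7) (Fin 7) ℝ).submatrix Fin.succ (Fin.succAbove 2) =
      !![σ, -σ, 0, 0, 0, 0;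
         0, σ, 0, 0, 0, 0;
         σ, 0, -σ, -Ω, 0, 0;
         0, 0, Ω, -σ, 0, 0;
         0, 0, σ, 0, -σ, -Ω;
         0, 0, 0, σ, Ω, -σ] := by
    ext i j
    fin_cases i <;> fin_cases j <;> rfl
  have hB : (!![0, 0, -Ue, 0, 0, -(ε * Ue), 0;
         σ, -σ, 0, 0, 0, 0, 0;
         0, σ, -σ, 0, 0, 0, 0;
         σ, 0, 0, -σ, -Ω, 0, 0;
         0, 0, 0, Ω, -σ, 0, 0;
         0, 0, 0, σ, 0, -σ, -Ω;
         0, 0, 0, 0, σ, Ω, -σ] : Matrix (Fin 7) (Fin 7) ℝ).submatrix Fin.succ ((Fin.succ 2).succ.succ.succAbove) =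
      !![σ, -σ, 0, 0, 0, 0;
         0, σ, -σ, 0, 0, 0;
         σ, 0, 0, -σ, -Ω, 0;
         0, 0, 0, Ω, -σ, 0;
         0, 0, 0, σ, 0, -Ω;
         0, 0, 0, 0, σ, -σ] := by
    ext i j
    fin_cases i <;> fin_cases j <;> rfl
  have hd : M.det = Ue * σ ^ 6 * (ε * (θ - 1) - (θ + 1) ^ 2) := by
    rw [Matrix.det_succ_row_zero, Fin.sum_univ_succ, Fin.sum_univ_succ,
      Fin.sum_univ_succ, Fin.sum_univ_succ, Fin.sum_univ_succ, Fin.sum_univ_succ,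
      Fin.sum_univ_succ, Fin.sum_univ_zero]
    norm_num [M]
    rw [hA, hB, det6A, det6B]
    subst hθ
    have hσ' : σ ≠ 0 := ne_of_gt hσ
    field_simp
    simp
    ring
  refine ⟨hd, ?_⟩
  have h := Matrix.det_eq_sign_charpoly_coeff M
  rw [hd] at h
  simp only [Fintype.card_fin] at h
  norm_num at h
  linarith
end
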